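/- For the matrix A defined by A_{i,j} = δ_{i,j}·pᵢ + 2·min(i,j) with indices i,j ranging over a finite set of positive integers and all pᵢ > 0, the matrix A is symmetric positive definite. -/
import Mathlib


/-- For indices `i₁ < ⋯ < i_g` in the positive integers and positive reals
`pᵢ`, the matrix `A_{i,j} = δ_{i,j} pᵢ + 2 min(i,j)` is symmetric positive
definite. -/
theorem delta_plus_two_min_posDef (g : ℕ) (ι : Fin g → ℕ) (hmono : StrictMono ι)
    (hιpos : ∀ i, 0 < ι i) (p : Fin g → ℝ) (hp : ∀ i, 0 < p i) :
    (Matrix.of fun i j : Fin g =>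
      (if i = j then p i else 0) + 2 * ((min (ι i) (ι j) : ℕ) : ℝ)).PosDef := by
  classical
  set N := Finset.univ.sup ι with hN
  have hle : ∀ i, ι i ≤ N := fun i => Finset.le_sup (Finset.mem_univ i)
  set B : Matrix (Fin N) (Fin g) ℝ :=
    Matrix.of fun k i => if (k : ℕ) < ι i then Real.sqrt 2 else 0 with hB
  have key : (Matrix.of fun i j : Fin g =>
      (if i = j then p i else 0) + 2 * ((min (ι i) (ι j) : ℕ) : ℝ))
      = Matrix.diagonal p + B.conjTranspose * B := by
    ext i j
    simp only [Matrix.add_apply, Matrix.diagonal_apply, Matrix.of_apply, Matrix.mul_apply,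
      Matrix.conjTranspose_apply, hB, star_trivial]
    congr 1
    have hmin : min (ι i) (ι j) ≤ N := le_trans (min_le_left _ _) (hle i)
    rw [Fin.sum_univ_eq_sum_range
      (fun k => (if k < ι i then Real.sqrt 2 else 0) * (if k < ι j then Real.sqrt 2 else 0))]
    have : ∀ k, (if k < ι i then Real.sqrt 2 else 0) * (if k < ι j then Real.sqrt 2 else 0)
        = if k < min (ι i) (ι j) then (2 : ℝ) else 0 := by
      intro k
      by_cases h1 : k < ι i <;> by_cases h2 : k < ι j <;>
        simp [h1, h2, lt_min_iff, Real.mul_self_sqrt (by norm_num : (0:ℝ) ≤ 2)]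
    rw [Finset.sum_congr rfl fun k _ => this k, ← Finset.sum_filter]
    have hf : (Finset.range N).filter (· < min (ι i) (ι j)) = Finset.range (min (ι i) (ι j)) := by
      ext k; simp only [Finset.mem_filter, Finset.mem_range]; omega
    rw [hf, Finset.sum_const, Finset.card_range, nsmul_eq_mul, mul_comm]
  rw [key]
  exact (Matrix.PosDef.diagonal hp).add_posSemidef (Matrix.posSemidef_conjTranspose_mul_self B)
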